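/- Let H > 1 and m = Σ_{t=0}^{L-1} H^t · 2Hd + H^L · d_in. There exist fixed matrices R_Q^{l,h}, R_K^{l,h} ∈ R^{m×d}, routing matrices R_V^{l,h} ∈ R^{m×m}, and U ∈ R^{m×d_in} such that for any target transformer parameters {W_Q^{l,h}, W_K^{l,h}, W_V^{l,h}, W_O^{l,h}}, there exists E ∈ R^{d_in×m} satisfying, for every prefix (h_1,...,h_{l-1}) ∈ [H]^{l-1} and head h_l: E R_V^{1,h_1}···R_V^{l-1,h_{l-1}} R_Q^{l,h_l} = M^{1:l-1,(h_1,...,h_{l-1})} W_Q^{l,h_l}, the analogous key equation, and for every full path E R_V^{1,h_1}···R_V^{L,h_L} U = M^{1:L,(h_1,...,h_L)}, where M^{1:t,(h_1,...,h_t)} = Π_{s=1}^t W_V^{s,h_s} W_O^{s,h_s} (empty product = identity). -/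

import Mathlib

/-!
Index the embedding coordinates by a tree: a node of depth `t` has an address `p : Fin t → Fin H`.
Every `R_V^{l,h}`, `R_Q^{l,h}`, `R_K^{l,h}`, `U` is a selection matrix, so `E * R` just reads `E`
at other coordinates. The routing matrix `R_V^{l,h}` makes every address read the address obtained
by overwriting its digit `l` with `h`; after routing along `h_1, …, h_l`, every node of depth `l`
therefore reads the block that `E` stores at the node with address `(h_1, …, h_l)`. So it suffices
to let `E` store `M^{p} W_Q`, `M^{p} W_K` at the internal node `p` and `M^{p}` at the leaf `p`.
-/

open Matrix

/-- `wPath hs l = (W_V^{1,h_1} W_O^{1,h_1}) ⋯ (W_V^{l,h_l} W_O^{l,h_l})`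
(the matrices `M^{1:l,(h_1,…,h_l)}`; empty product = identity). -/
noncomputable def wPath {din d H : ℕ}
    (WV : ℕ → Fin H → Matrix (Fin din) (Fin d) ℝ)
    (WO : ℕ → Fin H → Matrix (Fin d) (Fin din) ℝ)
    (hs : ℕ → Fin H) : ℕ → Matrix (Fin din) (Fin din) ℝ
  | 0 => 1
  | l + 1 => wPath WV WO hs l * (WV l (hs l) * WO l (hs l))

/-- `rPath hs l = R_V^{1,h_1} ⋯ R_V^{l,h_l}` (empty product = identity). -/
noncomputable def rPath {m H : ℕ}
    (RV : ℕ → Fin H → Matrix (Fin m) (Fin m) ℝ)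
    (hs : ℕ → Fin H) : ℕ → Matrix (Fin m) (Fin m) ℝ
  | 0 => 1
  | l + 1 => rPath RV hs l * RV l (hs l)

def selectMatrix {R α β : Type*} [Zero R] [One R] [DecidableEq α] (f : β → α) :
    Matrix α β R :=
  (1 : Matrix α α R).submatrix id f

theorem mul_selectMatrix {R α β γ : Type*} [NonAssocSemiring R] [Fintype α] [DecidableEq α]
    (M : Matrix γ α R) (f : β → α) : M * (selectMatrix f : Matrix α β R) = M.submatrix id f := by
  simpa [selectMatrix] using mul_submatrix_one (Equiv.refl α) f M

theorem mul_rPath_selectMatrix {m H : ℕ} {γ : Type*} (M : Matrix γ (Fin m) ℝ)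
    (f : ℕ → Fin H → Fin m → Fin m) (hs : ℕ → Fin H) (g : ℕ → Fin m → Fin m)
    (hg₀ : g 0 = id) (hg : ∀ l, g (l + 1) = g l ∘ f l (hs l)) (l : ℕ) :
    M * rPath (fun l h => selectMatrix (f l h)) hs l = M.submatrix id (g l) := by
  induction l with
  | zero => simp [rPath, hg₀]
  | succ l ih =>
    rw [rPath, ← Matrix.mul_assoc, ih, mul_selectMatrix, submatrix_submatrix, hg, Function.id_comp]

noncomputable def prefixProd {din d H t : ℕ} (WV : ℕ → Fin H → Matrix (Fin din) (Fin d) ℝ)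
    (WO : ℕ → Fin H → Matrix (Fin d) (Fin din) ℝ) (p : Fin t → Fin H) :
    Matrix (Fin din) (Fin din) ℝ :=
  (List.ofFn fun i : Fin t => WV i (p i) * WO i (p i)).prod

theorem wPath_eq_prefixProd {din d H : ℕ} (WV : ℕ → Fin H → Matrix (Fin din) (Fin d) ℝ)
    (WO : ℕ → Fin H → Matrix (Fin d) (Fin din) ℝ) (hs : ℕ → Fin H) (l : ℕ) :
    wPath WV WO hs l = prefixProd WV WO (fun i : Fin l => hs i) := by
  induction l with
  | zero => simp [wPath, prefixProd]
  | succ l ih =>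
    rw [wPath, ih, prefixProd, prefixProd, List.ofFn_succ', List.prod_concat]
    rfl

section Addresses

variable {H t : ℕ}

def setDigit (s : ℕ) (h : Fin H) (p : Fin t → Fin H) : Fin t → Fin H :=
  fun i => if (i : ℕ) = s then h else p i

def fillPrefix (l : ℕ) (hs : ℕ → Fin H) (p : Fin t → Fin H) : Fin t → Fin H :=
  fun i => if (i : ℕ) < l then hs i else p i

theorem fillPrefix_zero (hs : ℕ → Fin H) : fillPrefix (t := t) 0 hs = id := by
  funext p i
  simp [fillPrefix]

theorem fillPrefix_comp_setDigit (l : ℕ) (hs : ℕ → Fin H) :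
    fillPrefix (t := t) l hs ∘ setDigit l (hs l) = fillPrefix (l + 1) hs := by
  funext p i
  simp only [Function.comp_apply, fillPrefix, setDigit]
  split_ifs <;> first | rfl | omega | (congr 1; omega)

theorem fillPrefix_self (hs : ℕ → Fin H) (p : Fin t → Fin H) :
    fillPrefix t hs p = fun i : Fin t => hs i := by
  funext i
  simp [fillPrefix]

end Addresses

/-- Coordinates of the embedding space: a node of depth `t < L` with address `p : Fin t → Fin H`
carries `H` query and `H` key sub-blocks of width `d`; a leaf carries a block of width `din`. -/
abbrev TreeCoord (H L d din : ℕ) : Type :=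
  (Σ t : Fin L, (Fin t → Fin H) × ((Fin H × Fin d) ⊕ (Fin H × Fin d))) ⊕ ((Fin L → Fin H) × Fin din)

namespace TreeCoord

variable {H L d din : ℕ}

theorem card : Fintype.card (TreeCoord H L d din) =
    (∑ t ∈ Finset.range L, H ^ t) * (2 * H * d) + H ^ L * din := by
  simp only [Fintype.card_sum, Fintype.card_sigma, Fintype.card_prod, Fintype.card_fun,
    Fintype.card_fin]
  rw [Fin.sum_univ_eq_sum_range (fun t => H ^ t * (H * d + H * d)), Finset.sum_mul]
  congr 1
  exact Finset.sum_congr rfl fun t _ => by ring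

def mapAddr (φ : ∀ t, (Fin t → Fin H) → Fin t → Fin H) :
    TreeCoord H L d din → TreeCoord H L d din :=
  Sum.map (Sigma.map id fun t => Prod.map (φ t) id) (Prod.map (φ L) id)

theorem mapAddr_id : mapAddr (H := H) (L := L) (d := d) (din := din) (fun _ => id) = id := by
  funext x
  rcases x with ⟨t, p, i⟩ | ⟨p, j⟩ <;> rfl

theorem mapAddr_mapAddr (φ ψ : ∀ t, (Fin t → Fin H) → Fin t → Fin H)
    (x : TreeCoord H L d din) : mapAddr φ (mapAddr ψ x) = mapAddr (fun t => φ t ∘ ψ t) x := by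
  rcases x with ⟨t, p, i⟩ | ⟨p, j⟩ <;> rfl

def query (h₀ : Fin H) (t : Fin L) (h : Fin H) (j : Fin d) : TreeCoord H L d din :=
  .inl ⟨t, fun _ => h₀, .inl (h, j)⟩

def key (h₀ : Fin H) (t : Fin L) (h : Fin H) (j : Fin d) : TreeCoord H L d din :=
  .inl ⟨t, fun _ => h₀, .inr (h, j)⟩

def leaf (h₀ : Fin H) (j : Fin din) : TreeCoord H L d din :=
  .inr (fun _ => h₀, j)

end TreeCoord

open TreeCoord

section Construction

variable {H L d din m : ℕ}

noncomputable def embed (WQ WK WV : ℕ → Fin H → Matrix (Fin din) (Fin d) ℝ)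
    (WO : ℕ → Fin H → Matrix (Fin d) (Fin din) ℝ) : Matrix (Fin din) (TreeCoord H L d din) ℝ :=
  Matrix.of fun a x => match x with
    | .inl ⟨t, p, .inl (h, j)⟩ => (prefixProd WV WO p * WQ t h) a j
    | .inl ⟨t, p, .inr (h, j)⟩ => (prefixProd WV WO p * WK t h) a j
    | .inr (p, j) => prefixProd WV WO p a j

noncomputable def routing (e : Fin m ≃ TreeCoord H L d din) (l : ℕ) (h : Fin H) :
    Matrix (Fin m) (Fin m) ℝ :=
  selectMatrix (e.symm ∘ mapAddr (fun _ => setDigit l h) ∘ e)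

theorem submatrix_mul_rPath_routing {γ : Type*} (M : Matrix γ (TreeCoord H L d din) ℝ)
    (e : Fin m ≃ TreeCoord H L d din) (hs : ℕ → Fin H) (l : ℕ) :
    M.submatrix id e * rPath (routing e) hs l =
      M.submatrix id (mapAddr (fun _ => fillPrefix l hs) ∘ e) := by
  refine (mul_rPath_selectMatrix _ _ hs
    (fun l => e.symm ∘ mapAddr (fun _ => fillPrefix l hs) ∘ e) ?_ ?_ l).trans ?_
  · simp only [fillPrefix_zero, mapAddr_id, Function.id_comp, Equiv.symm_comp_self]
  · intro l
    funext x
    simp only [Function.comp_apply, Equiv.apply_symm_apply, mapAddr_mapAddr,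
      fillPrefix_comp_setDigit]
  · rw [submatrix_submatrix, Function.id_comp, ← Function.comp_assoc e, Equiv.self_comp_symm,
      Function.id_comp]

section Routed

variable (WQ WK WV : ℕ → Fin H → Matrix (Fin din) (Fin d) ℝ)
  (WO : ℕ → Fin H → Matrix (Fin d) (Fin din) ℝ) (hs : ℕ → Fin H) (h₀ h : Fin H)

theorem embed_fillPrefix_query (t : Fin L) (j : Fin d) (a : Fin din) :
    embed WQ WK WV WO a (mapAddr (fun _ => fillPrefix t hs) (query h₀ t h j)) =
      (wPath WV WO hs t * WQ t h) a j := by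
  simp only [embed, query, mapAddr, Sum.map_inl, Sigma.map, Prod.map, fillPrefix_self,
    wPath_eq_prefixProd, of_apply, id]

theorem embed_fillPrefix_key (t : Fin L) (j : Fin d) (a : Fin din) :
    embed WQ WK WV WO a (mapAddr (fun _ => fillPrefix t hs) (key h₀ t h j)) =
      (wPath WV WO hs t * WK t h) a j := by
  simp only [embed, key, mapAddr, Sum.map_inl, Sigma.map, Prod.map, fillPrefix_self,
    wPath_eq_prefixProd, of_apply, id]

theorem embed_fillPrefix_leaf (j : Fin din) (a : Fin din) :
    embed WQ WK WV WO a (mapAddr (fun _ => fillPrefix L hs) (leaf (L := L) (d := d) h₀ j)) =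
      wPath WV WO hs L a j := by
  simp only [embed, leaf, mapAddr, Sum.map_inr, Prod.map, fillPrefix_self, wPath_eq_prefixProd,
    of_apply, id]

end Routed

end Construction

/-- sparse multi-head universal transformer: for `H > 1` and
`m = Σ_{t=0}^{L-1} H^t·2Hd + H^L·d_in` there exist fixed matrices
`R_Q^{l,h}, R_K^{l,h}, R_V^{l,h}, U` such that for any target transformer
parameters there exists an embedding `E` matching, along every head path, the
query and key products and the full value path `M^{1:L,(h_1,…,h_L)}`. -/
theorem stmt7 {H L d din m : ℕ} (hH : 1 < H)
    (hm : m = (∑ t ∈ Finset.range L, H ^ t) * (2 * H * d) + H ^ L * din) :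
    ∃ (RQ RK : ℕ → Fin H → Matrix (Fin m) (Fin d) ℝ)
      (RV : ℕ → Fin H → Matrix (Fin m) (Fin m) ℝ)
      (U : Matrix (Fin m) (Fin din) ℝ),
      ∀ (WQ WK WV : ℕ → Fin H → Matrix (Fin din) (Fin d) ℝ)
        (WO : ℕ → Fin H → Matrix (Fin d) (Fin din) ℝ),
        ∃ E : Matrix (Fin din) (Fin m) ℝ,
          (∀ (hs : ℕ → Fin H), ∀ l < L,
            E * rPath RV hs l * RQ l (hs l) = wPath WV WO hs l * WQ l (hs l) ∧
            E * rPath RV hs l * RK l (hs l) = wPath WV WO hs l * WK l (hs l)) ∧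
          ∀ (hs : ℕ → Fin H),
            E * rPath RV hs L * U = wPath WV WO hs L := by
  let h₀ : Fin H := ⟨0, by omega⟩
  let e : Fin m ≃ TreeCoord H L d din :=
    Fintype.equivOfCardEq (by rw [Fintype.card_fin, TreeCoord.card, hm])
  refine ⟨fun l h => if hl : l < L then selectMatrix (e.symm ∘ query h₀ ⟨l, hl⟩ h) else 0,
    fun l h => if hl : l < L then selectMatrix (e.symm ∘ key h₀ ⟨l, hl⟩ h) else 0,
    routing e, selectMatrix (e.symm ∘ leaf h₀),
    fun WQ WK WV WO => ⟨(embed WQ WK WV WO).submatrix id e, fun hs l hl => ?_, fun hs => ?_⟩⟩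
  · simp only [dif_pos hl, submatrix_mul_rPath_routing, mul_selectMatrix, submatrix_submatrix]
    constructor <;> ext a j
    · simpa using embed_fillPrefix_query WQ WK WV WO hs h₀ (hs l) ⟨l, hl⟩ j a
    · simpa using embed_fillPrefix_key WQ WK WV WO hs h₀ (hs l) ⟨l, hl⟩ j a
  · simp only [submatrix_mul_rPath_routing, mul_selectMatrix, submatrix_submatrix]
    ext a j
    simpa using embed_fillPrefix_leaf WQ WK WV WO hs h₀ j a
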